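/- arXiv:1211.3661 — 4 statements merged into one kernel-verified Lean document; each statement's English description precedes it below -/
import Mathlib

section
/- Let F be a nonarchimedean local field with ring of integers O, residue cardinality q, uniformizer p, and Haar measure with vol(O)=1. Let χ and χ' be unramified characters of F^* such that the integrals below converge absolutely. Then 1 + q ∫_{O∖{0,-1}} χ(t)χ'(1+t) dt = (q - 1) · (1 - q^{-2}(χχ')(p)) / ((1 - q^{-1}χ(p))(1 - q^{-1}χ'(p))). -/
/-!
Split `O ∖ {0, -1}` into the punctured maximal ideal `pO ∖ {0}`, its translate by `-1`, and the
set of units `t` for which `1 + t` is also a unit. On the first piece `χ'(1 + t) = 1`, on the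
second `χ(t) = 1`, and on the third the integrand is `1`. The first two integrals are geometric
series over the shells `|t| = q⁻ᵏ`, of volume `(1 - q⁻¹) q⁻ᵏ`, summing to `(1 - q⁻¹) x / (1 - x)`
with `x = q⁻¹ χ(p)`; the third piece has volume `1 - 2q⁻¹`. The volume `q⁻ᵏ` of `pᵏO` comes from
translation invariance and the index `[O : pᵏO] = qᵏ`.
-/

open MeasureTheory Function
open scoped ENNReal

theorem AddSubgroup.relIndex_mul_measure {G : Type*} [AddGroup G] [MeasurableSpace G]
    [MeasurableAdd G] {H K : AddSubgroup G} (hHK : H ≤ K) [(H.addSubgroupOf K).FiniteIndex]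
    (hH : MeasurableSet (H : Set G)) (hK : MeasurableSet (K : Set G))
    (μ : Measure G) [μ.IsAddLeftInvariant] : H.relIndex K * μ H = μ K := by
  have hval : MeasurableEmbedding (K.subtype : K → G) := .subtype_coe hK
  have : MeasurableAdd K :=
    ⟨fun c => (measurable_const_add (c : G)).comp measurable_subtype_coe |>.subtype_mk,
     fun c => (measurable_add_const (c : G)).comp measurable_subtype_coe |>.subtype_mk⟩
  have := Measure.IsAddLeftInvariant.comap μ hval
  have key := (H.addSubgroupOf K).index_mul_measure
    (measurable_subtype_coe hH) (μ.comap K.subtype)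
  rwa [hval.comap_apply, hval.comap_apply, Set.image_univ, AddSubgroup.coe_subtype,
    Subtype.range_coe, AddSubgroup.coe_addSubgroupOf, AddSubgroup.coe_subtype,
    Set.image_preimage_eq_inter_range, Subtype.range_coe, Set.inter_eq_left.mpr hHK] at key

theorem MeasureTheory.integrableOn_iUnion_and_hasSum_of_eqOn_const {X E ι : Type*}
    [MeasurableSpace X] [NormedAddCommGroup E] [NormedSpace ℝ E] [CompleteSpace E] [Countable ι]
    {μ : Measure X} {f : X → E} {s : ι → Set X} {c : ι → E} (hs : ∀ i, MeasurableSet (s i))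
    (hd : Pairwise (Disjoint on s)) (hμ : ∀ i, μ (s i) ≠ ∞)
    (hf : ∀ i, Set.EqOn f (fun _ => c i) (s i)) (hsum : Summable fun i => ‖μ.real (s i) • c i‖) :
    IntegrableOn f (⋃ i, s i) μ ∧
      HasSum (fun i => μ.real (s i) • c i) (∫ x in ⋃ i, s i, f x ∂μ) := by
  have hint (i : ι) : ∫ x in s i, f x ∂μ = μ.real (s i) • c i := by
    rw [setIntegral_congr_fun (hs i) (hf i), setIntegral_const]
  have hi (i : ι) : IntegrableOn f (s i) μ :=
    (integrableOn_const (hμ i)).congr_fun (hf i).symm (hs i)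
  have hf_int : IntegrableOn f (⋃ i, s i) μ := by
    refine integrableOn_iUnion_of_summable_integral_norm hi (hsum.congr fun i => ?_)
    rw [setIntegral_congr_fun (hs i) fun x hx => congrArg norm (hf i hx), setIntegral_const,
      norm_smul, Real.norm_of_nonneg measureReal_nonneg, smul_eq_mul]
  exact ⟨hf_int, by simpa only [hint] using hasSum_integral_iUnion hs hd hf_int⟩

theorem Complex.norm_inv_natCast_mul_lt_one {n : ℕ} {c : ℂ} (h : ‖c‖ < n) :
    ‖(n : ℂ)⁻¹ * c‖ < 1 := by
  rwa [norm_mul, norm_inv, Complex.norm_natCast, inv_mul_lt_one₀ ((norm_nonneg c).trans_lt h)]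

namespace IsUltrametricDist

variable {R : Type*} [SeminormedRing R] [NormOneClass R] [IsUltrametricDist R] {t : R}

theorem norm_one_add_of_norm_lt_one (h : ‖t‖ < 1) : ‖1 + t‖ = 1 := by
  rw [norm_add_eq_max_of_norm_ne_norm (by rw [norm_one]; exact h.ne'), norm_one, max_eq_left h.le]

theorem norm_eq_one_of_norm_one_add_lt_one (h : ‖1 + t‖ < 1) : ‖t‖ = 1 := by
  have := norm_eq_of_add_norm_lt_max (h.trans_le (le_max_of_le_left (norm_one (α := R)).ge))
  rwa [norm_one, eq_comm] at this

theorem disjoint_norm_lt_one_norm_one_add_lt_one :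
    Disjoint {t : R | ‖t‖ < 1} {t | ‖1 + t‖ < 1} :=
  Set.disjoint_left.mpr fun _ h h' => (norm_one_add_of_norm_lt_one h).not_lt h'

theorem setOf_norm_le_one_eq_union :
    {t : R | ‖t‖ ≤ 1} = ({t | ‖t‖ < 1} ∪ {t | ‖1 + t‖ < 1}) ∪ {t | ‖t‖ = 1 ∧ ‖1 + t‖ = 1} := by
  ext t
  have h1 : ‖t‖ ≤ 1 → ‖1 + t‖ ≤ 1 := fun h => by
    simpa [add_comm] using (norm_add_one_le_max_norm_one t).trans (max_le h le_rfl)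
  have h2 := @norm_eq_one_of_norm_one_add_lt_one _ _ _ _ t
  simp only [Set.mem_union, Set.mem_ofPred_eq]
  grind

theorem setOf_norm_le_one_sdiff_eq_union :
    {t : R | ‖t‖ ≤ 1 ∧ t ≠ 0 ∧ t ≠ -1} =
      ({t | t ≠ 0 ∧ ‖t‖ < 1} ∪ (1 + ·) ⁻¹' {t | t ≠ 0 ∧ ‖t‖ < 1}) ∪
        {t | ‖t‖ = 1 ∧ ‖1 + t‖ = 1} := by
  ext t
  have key := Set.ext_iff.mp setOf_norm_le_one_eq_union t
  have hneg : t = -1 ↔ 1 + t = 0 := by rw [add_eq_zero_iff_neg_eq, eq_comm]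
  have h0 : t = 0 → ‖t‖ = 0 := fun h => h ▸ norm_zero
  have h1 : 1 + t = 0 → ‖1 + t‖ = 0 := fun h => h ▸ norm_zero
  have h2 := @norm_one_add_of_norm_lt_one _ _ _ _ t
  have h3 := @norm_eq_one_of_norm_one_add_lt_one _ _ _ _ t
  simp only [Set.mem_union, Set.mem_ofPred_eq, Set.mem_preimage] at key ⊢
  grind

end IsUltrametricDist

namespace PadicInt
variable {p : ℕ} [Fact p.Prime]

theorem index_span_p_pow (k : ℕ) :
    (Ideal.span {(p : ℤ_[p]) ^ k}).toAddSubgroup.index = p ^ k := by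
  rw [← ker_toZModPow]
  change (toZModPow k : ℤ_[p] →+* ZMod (p ^ k)).toAddMonoidHom.ker.index = p ^ k
  rw [AddSubgroup.index_ker, AddMonoidHom.range_eq_top.mpr (ZMod.ringHom_surjective _),
    AddSubgroup.card_top, Nat.card_zmod]

end PadicInt

namespace Padic
variable (p : ℕ) [Fact p.Prime]

/-- `pᵏℤ_[p]`, taken as the image of an ideal so that its index is read off
`PadicInt.ker_toZModPow`. -/
noncomputable def closedBallAddSubgroup (k : ℕ) : AddSubgroup ℚ_[p] :=
  (Ideal.span {(p : ℤ_[p]) ^ k}).toAddSubgroup.map PadicInt.Coe.ringHom.toAddMonoidHom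

variable {p}

theorem setOf_norm_le_zpow_subset {j k : ℕ} (h : j ≤ k) :
    {t : ℚ_[p] | ‖t‖ ≤ (p : ℝ) ^ (-k : ℤ)} ⊆ {t | ‖t‖ ≤ (p : ℝ) ^ (-j : ℤ)} := fun _ ht =>
  le_trans (α := ℝ) ht <| zpow_le_zpow_right₀ (Nat.one_le_cast.mpr (Fact.out : p.Prime).one_le)
    (neg_le_neg (Int.ofNat_le.mpr h))

theorem coe_closedBallAddSubgroup (k : ℕ) :
    (closedBallAddSubgroup p k : Set ℚ_[p]) = {x | ‖x‖ ≤ (p : ℝ) ^ (-k : ℤ)} := by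
  ext x
  constructor
  · rintro ⟨z, hz, rfl⟩
    exact (PadicInt.norm_le_pow_iff_mem_span_pow z k).mpr hz
  · intro hx
    have hx1 : ‖x‖ ≤ 1 := by simpa using setOf_norm_le_zpow_subset k.zero_le hx
    exact ⟨⟨x, hx1⟩, (PadicInt.norm_le_pow_iff_mem_span_pow _ k).mp hx, rfl⟩

theorem relIndex_closedBallAddSubgroup (k : ℕ) :
    (closedBallAddSubgroup p k).relIndex (closedBallAddSubgroup p 0) = p ^ k := by
  rw [closedBallAddSubgroup, closedBallAddSubgroup,
    AddSubgroup.relIndex_map_map_of_injective _ _ Subtype.val_injective, pow_zero,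
    Ideal.span_singleton_one, Submodule.top_toAddSubgroup, AddSubgroup.relIndex_top_right,
    PadicInt.index_span_p_pow]

theorem closedBall_diff_closedBall_succ (k : ℕ) :
    {t : ℚ_[p] | ‖t‖ ≤ (p : ℝ) ^ (-k : ℤ)} \ {t | ‖t‖ ≤ (p : ℝ) ^ (-(k + 1 : ℕ) : ℤ)} =
      {t | ‖t‖ = (p : ℝ) ^ (-k : ℤ)} := by
  ext t
  have h := norm_le_pow_iff_norm_lt_pow_add_one t (-(k + 1 : ℕ) : ℤ)
  rw [show (-(k + 1 : ℕ) : ℤ) + 1 = -k by omega] at h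
  simp only [Set.mem_sdiff, Set.mem_ofPred_eq, h, not_lt]
  exact ⟨fun h => le_antisymm h.1 h.2, fun h => ⟨h.le, h.ge⟩⟩

theorem iUnion_sphere_succ :
    ⋃ k : ℕ, {t : ℚ_[p] | ‖t‖ = (p : ℝ) ^ (-(k + 1 : ℕ) : ℤ)} = {t | t ≠ 0 ∧ ‖t‖ < 1} := by
  have hp : (1 : ℝ) < p := by exact_mod_cast (Fact.out : p.Prime).one_lt
  ext t
  simp only [Set.mem_iUnion, Set.mem_ofPred_eq]
  constructor
  · rintro ⟨k, hk⟩
    refine ⟨fun h => ?_, hk ▸ zpow_lt_one_of_neg₀ hp (by omega)⟩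
    rw [h, norm_zero] at hk
    exact (zpow_pos (by positivity) _).ne hk
  · rintro ⟨h0, h1⟩
    rw [norm_eq_zpow_neg_valuation h0] at h1 ⊢
    have hv : 0 < t.valuation := by
      simpa using (zpow_lt_one_iff_right₀ hp).mp h1
    exact ⟨t.valuation.toNat - 1, by congr; omega⟩

theorem pairwise_disjoint_setOf_norm_eq_zpow :
    Pairwise (Disjoint on fun k : ℕ => {t : ℚ_[p] | ‖t‖ = (p : ℝ) ^ (-k : ℤ)}) := by
  intro j k hjk
  refine Set.disjoint_left.mpr fun t hj hk => hjk ?_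
  have := zpow_right_injective₀ (by simp [(Fact.out : p.Prime).pos])
    (by simp [(Fact.out : p.Prime).ne_one]) ((hj : ‖t‖ = _).symm.trans hk)
  omega

variable {M : Type*} [Monoid M] {χ : ℚ_[p] → M}

theorem apply_eq_pow_of_norm_eq (hmul : ∀ x y : ℚ_[p], x ≠ 0 → y ≠ 0 → χ (x * y) = χ x * χ y)
    (hunr : ∀ x : ℚ_[p], ‖x‖ = 1 → χ x = 1) {t : ℚ_[p]} {k : ℕ}
    (ht : ‖t‖ = (p : ℝ) ^ (-k : ℤ)) : χ t = χ p ^ k := by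
  have hp : (p : ℚ_[p]) ≠ 0 := Nat.cast_ne_zero.mpr (Fact.out : p.Prime).ne_zero
  have hpow (n : ℕ) : χ ((p : ℚ_[p]) ^ n) = χ p ^ n := by
    induction n with
    | zero => simpa using hunr 1 norm_one
    | succ n ih => rw [pow_succ, hmul _ _ (pow_ne_zero _ hp) hp, ih, pow_succ]
  have hunit : ‖t / (p : ℚ_[p]) ^ k‖ = 1 := by
    rw [norm_div, norm_p_pow, ht, div_self (zpow_pos (by simp [(Fact.out : p.Prime).pos]) _).ne']
  have ht0 : t / (p : ℚ_[p]) ^ k ≠ 0 := norm_ne_zero_iff.mp (hunit ▸ one_ne_zero)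
  rw [← mul_div_cancel₀ t (pow_ne_zero k hp), hmul _ _ (pow_ne_zero k hp) ht0, hpow, hunr _ hunit,
    mul_one]

section Measure

variable [MeasurableSpace ℚ_[p]] [BorelSpace ℚ_[p]] (μ : Measure ℚ_[p]) [μ.IsAddLeftInvariant]

theorem measure_closedBall (hO : μ {t | ‖t‖ ≤ 1} = 1) (k : ℕ) :
    μ {t | ‖t‖ ≤ (p : ℝ) ^ (-k : ℤ)} = ((p : ℝ≥0∞) ^ k)⁻¹ := by
  have : ((closedBallAddSubgroup p k).addSubgroupOf (closedBallAddSubgroup p 0)).FiniteIndex :=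
    ⟨(relIndex_closedBallAddSubgroup k).trans_ne (pow_ne_zero _ (Fact.out : p.Prime).ne_zero)⟩
  have hle : closedBallAddSubgroup p k ≤ closedBallAddSubgroup p 0 := by
    rw [← SetLike.coe_subset_coe, coe_closedBallAddSubgroup, coe_closedBallAddSubgroup]
    exact setOf_norm_le_zpow_subset k.zero_le
  have hmeas (j : ℕ) : MeasurableSet (closedBallAddSubgroup p j : Set ℚ_[p]) := by
    rw [coe_closedBallAddSubgroup]
    exact measurableSet_le measurable_norm measurable_const
  have key := AddSubgroup.relIndex_mul_measure hle (hmeas k) (hmeas 0) μ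
  rw [relIndex_closedBallAddSubgroup, coe_closedBallAddSubgroup, coe_closedBallAddSubgroup,
    Nat.cast_zero, neg_zero, zpow_zero, hO, Nat.cast_pow, mul_comm] at key
  exact ENNReal.eq_inv_of_mul_eq_one_left key

theorem measure_closedBall_ne_top (hO : μ {t | ‖t‖ ≤ 1} = 1) (k : ℕ) :
    μ {t | ‖t‖ ≤ (p : ℝ) ^ (-k : ℤ)} ≠ ∞ :=
  (measure_closedBall μ hO k).trans_ne (by simp [(Fact.out : p.Prime).ne_zero])

theorem measureReal_sphere (hO : μ {t | ‖t‖ ≤ 1} = 1) (k : ℕ) :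
    μ.real {t | ‖t‖ = (p : ℝ) ^ (-k : ℤ)} = (1 - (p : ℝ)⁻¹) * (p : ℝ)⁻¹ ^ k := by
  rw [← closedBall_diff_closedBall_succ, measureReal_sdiff (setOf_norm_le_zpow_subset k.le_succ)
    (measurableSet_le measurable_norm measurable_const) (measure_closedBall_ne_top μ hO k),
    measureReal_def, measureReal_def,
    measure_closedBall μ hO, measure_closedBall μ hO]
  simp only [ENNReal.toReal_inv, ENNReal.toReal_pow, ENNReal.toReal_natCast, inv_pow,
    Nat.succ_eq_add_one]
  ring

theorem integrableOn_and_setIntegral_punctured_unitBall (hO : μ {t | ‖t‖ ≤ 1} = 1)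
    {χ : ℚ_[p] → ℂ} (hmul : ∀ x y : ℚ_[p], x ≠ 0 → y ≠ 0 → χ (x * y) = χ x * χ y)
    (hunr : ∀ x : ℚ_[p], ‖x‖ = 1 → χ x = 1) (hconv : ‖χ p‖ < p) :
    IntegrableOn χ {t | t ≠ 0 ∧ ‖t‖ < 1} μ ∧
      ∫ t in {t | t ≠ 0 ∧ ‖t‖ < 1}, χ t ∂μ =
        (1 - (p : ℂ)⁻¹) * ((p : ℂ)⁻¹ * χ p / (1 - (p : ℂ)⁻¹ * χ p)) := by
  set x : ℂ := (p : ℂ)⁻¹ * χ p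
  have hx : ‖x‖ < 1 := Complex.norm_inv_natCast_mul_lt_one hconv
  have hterm (k : ℕ) : μ.real {t | ‖t‖ = (p : ℝ) ^ (-(k + 1 : ℕ) : ℤ)} • χ p ^ (k + 1) =
      (1 - (p : ℂ)⁻¹) * x * x ^ k := by
    rw [measureReal_sphere μ hO, Complex.real_smul]
    push_cast
    ring
  have hgeom : HasSum (fun k : ℕ => (1 - (p : ℂ)⁻¹) * x * x ^ k)
      ((1 - (p : ℂ)⁻¹) * (x / (1 - x))) := by
    simpa [div_eq_mul_inv, mul_assoc] using
      (hasSum_geometric_of_norm_lt_one hx).mul_left ((1 - (p : ℂ)⁻¹) * x)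
  obtain ⟨hint, hsum⟩ := integrableOn_iUnion_and_hasSum_of_eqOn_const (μ := μ) (f := χ)
    (s := fun k : ℕ => {t : ℚ_[p] | ‖t‖ = (p : ℝ) ^ (-(k + 1 : ℕ) : ℤ)})
    (c := fun k => χ p ^ (k + 1))
    (fun k => measurable_norm (measurableSet_singleton _))
    (pairwise_disjoint_setOf_norm_eq_zpow.comp_of_injective (add_left_injective 1))
    (fun k => measure_ne_top_of_subset (fun _ h => le_of_eq h) (measure_closedBall_ne_top μ hO _))
    (fun k t ht => apply_eq_pow_of_norm_eq hmul hunr ht)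
    (by simpa only [hterm] using hgeom.summable.norm)
  rw [iUnion_sphere_succ] at hint hsum
  exact ⟨hint, hsum.unique (by simpa only [hterm] using hgeom)⟩

theorem measureReal_setOf_norm_lt_one (hO : μ {t | ‖t‖ ≤ 1} = 1) :
    μ.real {t | ‖t‖ < 1} = (p : ℝ)⁻¹ := by
  have hball : {t : ℚ_[p] | ‖t‖ < 1} = {t | ‖t‖ ≤ (p : ℝ) ^ (-(1 : ℕ) : ℤ)} := by
    ext t
    rw [Set.mem_ofPred_eq, Set.mem_ofPred_eq, norm_le_pow_iff_norm_lt_pow_add_one]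
    norm_num
  rw [hball, measureReal_def, measure_closedBall μ hO]
  simp

open IsUltrametricDist in
theorem measureReal_setOf_norm_eq_one_and_norm_one_add_eq_one (hO : μ {t | ‖t‖ ≤ 1} = 1) :
    μ.real {t : ℚ_[p] | ‖t‖ = 1 ∧ ‖1 + t‖ = 1} = 1 - 2 * (p : ℝ)⁻¹ := by
  have hfin {s : Set ℚ_[p]} (hs : s ⊆ {t | ‖t‖ ≤ 1}) : μ s ≠ ∞ :=
    measure_ne_top_of_subset hs (hO ▸ ENNReal.one_ne_top)
  have hB : {t : ℚ_[p] | ‖t‖ < 1} ⊆ {t | ‖t‖ ≤ 1} := Set.ofPred_subset_ofPred.mpr fun _ => le_of_lt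
  have hB' : {t : ℚ_[p] | ‖1 + t‖ < 1} ⊆ {t | ‖t‖ ≤ 1} := fun _ h =>
    (norm_eq_one_of_norm_one_add_lt_one h).le
  have hU : {t : ℚ_[p] | ‖t‖ = 1 ∧ ‖1 + t‖ = 1} ⊆ {t | ‖t‖ ≤ 1} := fun _ h => h.1.le
  have hdisj : Disjoint ({t : ℚ_[p] | ‖t‖ < 1} ∪ {t | ‖1 + t‖ < 1}) {t | ‖t‖ = 1 ∧ ‖1 + t‖ = 1} :=
    Set.disjoint_left.mpr fun _ h hu => h.elim (·.ne hu.1) (·.ne hu.2)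
  have htotal : μ.real {t : ℚ_[p] | ‖t‖ ≤ 1} = 1 := by simp [measureReal_def, hO]
  have htrans : μ.real {t : ℚ_[p] | ‖1 + t‖ < 1} = μ.real {t : ℚ_[p] | ‖t‖ < 1} :=
    congrArg ENNReal.toReal (measure_preimage_add μ 1 {t | ‖t‖ < 1})
  rw [setOf_norm_le_one_eq_union,
    measureReal_union hdisj (by measurability) (hfin (Set.union_subset hB hB')) (hfin hU),
    measureReal_union disjoint_norm_lt_one_norm_one_add_lt_one (by measurability) (hfin hB)
      (hfin hB'), htrans, measureReal_setOf_norm_lt_one μ hO] at htotal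
  linarith

open IsUltrametricDist in
theorem integrableOn_and_setIntegral_mul_punctured_unitBall (hO : μ {t | ‖t‖ ≤ 1} = 1)
    {χ χ' : ℚ_[p] → ℂ} (hmul : ∀ x y : ℚ_[p], x ≠ 0 → y ≠ 0 → χ (x * y) = χ x * χ y)
    (hunr : ∀ x : ℚ_[p], ‖x‖ = 1 → χ x = 1) (hunr' : ∀ x : ℚ_[p], ‖x‖ = 1 → χ' x = 1)
    (hconv : ‖χ p‖ < p) :
    IntegrableOn (fun t => χ t * χ' (1 + t)) {t | t ≠ 0 ∧ ‖t‖ < 1} μ ∧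
      ∫ t in {t | t ≠ 0 ∧ ‖t‖ < 1}, χ t * χ' (1 + t) ∂μ =
        (1 - (p : ℂ)⁻¹) * ((p : ℂ)⁻¹ * χ p / (1 - (p : ℂ)⁻¹ * χ p)) := by
  have hA : MeasurableSet {t : ℚ_[p] | t ≠ 0 ∧ ‖t‖ < 1} := by measurability
  have heq : Set.EqOn χ (fun t => χ t * χ' (1 + t)) {t | t ≠ 0 ∧ ‖t‖ < 1} := fun t ht => by
    simp [hunr' _ (norm_one_add_of_norm_lt_one ht.2)]
  obtain ⟨hint, hval⟩ := integrableOn_and_setIntegral_punctured_unitBall μ hO hmul hunr hconv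
  exact ⟨hint.congr_fun heq hA, (setIntegral_congr_fun hA heq).symm.trans hval⟩

open IsUltrametricDist in
theorem integrableOn_and_setIntegral_mul_preimage_punctured_unitBall
    (hO : μ {t | ‖t‖ ≤ 1} = 1) {χ χ' : ℚ_[p] → ℂ}
    (hmul' : ∀ x y : ℚ_[p], x ≠ 0 → y ≠ 0 → χ' (x * y) = χ' x * χ' y)
    (hunr : ∀ x : ℚ_[p], ‖x‖ = 1 → χ x = 1) (hunr' : ∀ x : ℚ_[p], ‖x‖ = 1 → χ' x = 1)
    (hconv' : ‖χ' p‖ < p) :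
    IntegrableOn (fun t => χ t * χ' (1 + t)) ((1 + ·) ⁻¹' {t | t ≠ 0 ∧ ‖t‖ < 1}) μ ∧
      ∫ t in (1 + ·) ⁻¹' {t | t ≠ 0 ∧ ‖t‖ < 1}, χ t * χ' (1 + t) ∂μ =
        (1 - (p : ℂ)⁻¹) * ((p : ℂ)⁻¹ * χ' p / (1 - (p : ℂ)⁻¹ * χ' p)) := by
  have hA : MeasurableSet ((1 + ·) ⁻¹' {t : ℚ_[p] | t ≠ 0 ∧ ‖t‖ < 1}) := by measurability
  have heq : Set.EqOn (χ' ∘ (1 + ·)) (fun t => χ t * χ' (1 + t))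
      ((1 + ·) ⁻¹' {t | t ≠ 0 ∧ ‖t‖ < 1}) := fun t ht => by
    simp [hunr _ (norm_eq_one_of_norm_one_add_lt_one ht.2)]
  have hmp := measurePreserving_add_left μ 1
  have hemb := measurableEmbedding_addLeft (G := ℚ_[p]) 1
  obtain ⟨hint, hval⟩ := integrableOn_and_setIntegral_punctured_unitBall μ hO hmul' hunr' hconv'
  exact ⟨((hmp.integrableOn_comp_preimage hemb).mpr hint).congr_fun heq hA,
    (setIntegral_congr_fun hA heq).symm.trans ((hmp.setIntegral_preimage_emb hemb χ' _).trans hval)⟩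

open IsUltrametricDist in
theorem setIntegral_mul_one_add (hO : μ {t | ‖t‖ ≤ 1} = 1) {χ χ' : ℚ_[p] → ℂ}
    (hmul : ∀ x y : ℚ_[p], x ≠ 0 → y ≠ 0 → χ (x * y) = χ x * χ y)
    (hmul' : ∀ x y : ℚ_[p], x ≠ 0 → y ≠ 0 → χ' (x * y) = χ' x * χ' y)
    (hunr : ∀ x : ℚ_[p], ‖x‖ = 1 → χ x = 1) (hunr' : ∀ x : ℚ_[p], ‖x‖ = 1 → χ' x = 1)
    (hconv : ‖χ p‖ < p) (hconv' : ‖χ' p‖ < p) :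
    ∫ t in {t : ℚ_[p] | ‖t‖ ≤ 1 ∧ t ≠ 0 ∧ t ≠ -1}, χ t * χ' (1 + t) ∂μ =
      (1 - (p : ℂ)⁻¹) * ((p : ℂ)⁻¹ * χ p / (1 - (p : ℂ)⁻¹ * χ p)) +
        (1 - (p : ℂ)⁻¹) * ((p : ℂ)⁻¹ * χ' p / (1 - (p : ℂ)⁻¹ * χ' p)) + (1 - 2 * (p : ℂ)⁻¹) := by
  obtain ⟨hint, hval⟩ :=
    integrableOn_and_setIntegral_mul_punctured_unitBall μ hO hmul hunr hunr' hconv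
  obtain ⟨hint', hval'⟩ :=
    integrableOn_and_setIntegral_mul_preimage_punctured_unitBall μ hO hmul' hunr hunr' hconv'
  set U := {t : ℚ_[p] | ‖t‖ = 1 ∧ ‖1 + t‖ = 1}
  have hU : MeasurableSet U := by measurability
  have hUeq : Set.EqOn (fun _ => (1 : ℂ)) (fun t => χ t * χ' (1 + t)) U := fun t ht => by
    simp [hunr _ ht.1, hunr' _ ht.2]
  have hUint : IntegrableOn (fun t => χ t * χ' (1 + t)) U μ :=
    (integrableOn_const (measure_ne_top_of_subset (fun t ht => ht.1.le)
      (hO ▸ ENNReal.one_ne_top))).congr_fun hUeq hU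
  have hdisj : Disjoint {t : ℚ_[p] | t ≠ 0 ∧ ‖t‖ < 1} ((1 + ·) ⁻¹' {t | t ≠ 0 ∧ ‖t‖ < 1}) :=
    disjoint_norm_lt_one_norm_one_add_lt_one.mono (fun _ h => h.2) (fun _ h => h.2)
  have hdisjU : Disjoint ({t : ℚ_[p] | t ≠ 0 ∧ ‖t‖ < 1} ∪ (1 + ·) ⁻¹' {t | t ≠ 0 ∧ ‖t‖ < 1}) U :=
    Set.disjoint_left.mpr fun _ h hu => h.elim (·.2.ne hu.1) (·.2.ne hu.2)
  rw [setOf_norm_le_one_sdiff_eq_union, setIntegral_union hdisjU hU (hint.union hint') hUint,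
    setIntegral_union hdisj (by measurability) hint hint', hval, hval',
    ← setIntegral_congr_fun hU hUeq, setIntegral_const,
    measureReal_setOf_norm_eq_one_and_norm_one_add_eq_one μ hO, Complex.real_smul, mul_one]
  push_cast
  ring

end Measure

end Padic

/-- Let `F = ℚ_[p]` with ring of integers `O`, residue cardinality `q = p`,
uniformizer `p`, Haar measure with `vol(O) = 1`.  Let `χ, χ'` be unramified characters of `F^*`
with the absolute-convergence bounds `|χ(p)| q⁻¹ < 1` and `|χ'(p)| q⁻¹ < 1`.  Then
`1 + q ∫_{O∖{0,-1}} χ(t) χ'(1+t) dt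
  = (q - 1) (1 - q⁻² (χχ')(p)) / ((1 - q⁻¹ χ(p))(1 - q⁻¹ χ'(p)))`. -/
theorem stmt2 (p : ℕ) [Fact p.Prime]
    [MeasurableSpace ℚ_[p]] [BorelSpace ℚ_[p]]
    (μ : Measure ℚ_[p]) [μ.IsAddLeftInvariant]
    (hO : μ {t : ℚ_[p] | ‖t‖ ≤ 1} = 1)
    (χ χ' : ℚ_[p] → ℂ)
    (hmul : ∀ x y : ℚ_[p], x ≠ 0 → y ≠ 0 → χ (x * y) = χ x * χ y)
    (hmul' : ∀ x y : ℚ_[p], x ≠ 0 → y ≠ 0 → χ' (x * y) = χ' x * χ' y)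
    (hunr : ∀ x : ℚ_[p], ‖x‖ = 1 → χ x = 1)
    (hunr' : ∀ x : ℚ_[p], ‖x‖ = 1 → χ' x = 1)
    (hconv : ‖χ (p : ℚ_[p])‖ < p) (hconv' : ‖χ' (p : ℚ_[p])‖ < p) :
    1 + (p : ℂ) * ∫ t in {t : ℚ_[p] | ‖t‖ ≤ 1 ∧ t ≠ 0 ∧ t ≠ -1}, χ t * χ' (1 + t) ∂μ =
      ((p : ℂ) - 1) * (1 - ((p : ℂ) ^ 2)⁻¹ * (χ (p : ℚ_[p]) * χ' (p : ℚ_[p]))) /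
        ((1 - (p : ℂ)⁻¹ * χ (p : ℚ_[p])) * (1 - (p : ℂ)⁻¹ * χ' (p : ℚ_[p]))) := by
  have hp : (p : ℂ) ≠ 0 := Nat.cast_ne_zero.mpr (Fact.out : p.Prime).ne_zero
  have hx : 1 - (p : ℂ)⁻¹ * χ p ≠ 0 :=
    sub_ne_zero.mpr fun h => by simpa [← h] using Complex.norm_inv_natCast_mul_lt_one hconv
  have hy : 1 - (p : ℂ)⁻¹ * χ' p ≠ 0 :=
    sub_ne_zero.mpr fun h => by simpa [← h] using Complex.norm_inv_natCast_mul_lt_one hconv'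
  rw [Padic.setIntegral_mul_one_add μ hO hmul hmul' hunr hunr' hconv hconv',
    show ((p : ℂ) ^ 2)⁻¹ * (χ p * χ' p) = (p : ℂ)⁻¹ * χ p * ((p : ℂ)⁻¹ * χ' p) by ring]
  generalize (p : ℂ)⁻¹ * χ p = x at hx ⊢
  generalize (p : ℂ)⁻¹ * χ' p = y at hy ⊢
  field_simp
  ring
end

section
/- Fix a positive integer m. Let χ̃_i = -(m+1-i) for 1 ≤ i ≤ m and ξ_j = -(m + 1/2 - j) for 1 ≤ j ≤ m. Suppose σ and σ' are signed permutations of {1,...,m} (bijections of {±1,...,±m} with σ(-i) = -σ(i)), acting by (σχ̃)_i = χ̃_{σ(i)} where χ̃_{-i} := -χ̃_i, and similarly for σ' on ξ. Assume: (1) χ̃_{σ(i)} - ξ_{σ'(j)} ≠ 1/2 for all i < j; (2) χ̃_{σ(i)} - ξ_{σ'(j)} ≠ -1/2 for all i > j; (3) ξ_{σ'(j)} ≠ 1/2 for all j; (4) χ̃_{σ(i)} + ξ_{σ'(j)} ≠ 1/2 for all i, j. Then σ and σ' are both the identity. -/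
/-!
Write `a x`, `b y` for the signs that the two signed permutations attach to `χ̃ x` and `ξ y`.
Since `ξ x - χ̃ x = 1/2` and `χ̃ (x + 1) - ξ x = 1/2`, condition (4) turns a negative sign at
`χ̃ x` into one at `ξ x`, and a negative sign at `ξ x` into one at `χ̃ (x + 1)`; the chain ends
at `ξ_last = -1/2`, which (3) forbids to carry a negative sign. So all signs are positive, and
then (2) and (1) say `π⁻¹ x ≤ π'⁻¹ x ≤ π⁻¹ (x + 1)`: both inverse permutations are monotone,
hence the identity.
-/

open Equiv

lemma Equiv.Perm.eq_one_of_monotone {α : Type*} [LinearOrder α] [Finite α] {p : Perm α}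
    (hp : Monotone p) : p = 1 :=
  Equiv.ext (congrFun (hp.strictMono_of_injective p.injective).eq_id)

lemma Fin.monotone_of_interlaced {n : ℕ} {α : Type*} [Preorder α] {p q : Fin (n + 1) → α}
    (hpq : ∀ k, p k ≤ q k) (hqp : ∀ k : Fin n, q k.castSucc ≤ p k.succ) :
    Monotone p ∧ Monotone q :=
  ⟨Fin.monotone_iff_le_succ.2 fun k => (hpq _).trans (hqp k),
    Fin.monotone_iff_le_succ.2 fun k => (hqp k).trans (hpq _)⟩

section

variable {K : Type*} [Field K] {n : ℕ} {a b u v : Fin (n + 1) → K}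

lemma signs_eq_one_of_add_ne_half (ha : ∀ x, a x = 1 ∨ a x = -1) (hb : ∀ y, b y = 1 ∨ b y = -1)
    (hvu : ∀ x, v x - u x = 1 / 2) (huv : ∀ x : Fin n, u x.succ - v x.castSucc = 1 / 2)
    (hlast : v (Fin.last n) = -(1 / 2))
    (h3 : ∀ y, b y * v y ≠ 1 / 2) (h4 : ∀ x y, a x * u x + b y * v y ≠ 1 / 2) :
    (∀ x, a x = 1) ∧ ∀ y, b y = 1 := by
  have hab : ∀ x, a x = -1 → b x = -1 := fun x hax =>
    (hb x).resolve_left fun hbx => h4 x x (by rw [hax, hbx]; linear_combination hvu x)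
  have hba : ∀ x : Fin n, b x.castSucc = -1 → a x.succ = -1 := fun x hbx =>
    (ha _).resolve_left fun hax => h4 _ _ (by rw [hax, hbx]; linear_combination huv x)
  have hb_last : b (Fin.last n) ≠ -1 := fun hbx => h3 _ (by rw [hbx, hlast]; ring)
  have ha_pos : ∀ x, a x ≠ -1 :=
    Fin.reverseInduction (fun hax => hb_last (hab _ hax))
      (fun x ih hax => ih (hba x (hab _ hax)))
  have hb_pos : ∀ y, b y ≠ -1 :=
    Fin.lastCases hb_last fun x hbx => ha_pos _ (hba x hbx)
  exact ⟨fun x => (ha x).resolve_right (ha_pos x), fun y => (hb y).resolve_right (hb_pos y)⟩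

lemma perms_eq_one_of_sub_ne_half (π π' : Perm (Fin (n + 1)))
    (hvu : ∀ x, v x - u x = 1 / 2) (huv : ∀ x : Fin n, u x.succ - v x.castSucc = 1 / 2)
    (h1 : ∀ i j, i < j → u (π i) - v (π' j) ≠ 1 / 2)
    (h2 : ∀ i j, j < i → u (π i) - v (π' j) ≠ -(1 / 2)) :
    π = 1 ∧ π' = 1 := by
  have hpq : ∀ k, π.symm k ≤ π'.symm k := fun k =>
    not_lt.1 fun hlt => h2 _ _ hlt (by simp only [apply_symm_apply]; linear_combination -hvu k)
  have hqp : ∀ k : Fin n, π'.symm k.castSucc ≤ π.symm k.succ := fun k =>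
    not_lt.1 fun hlt => h1 _ _ hlt (by simpa only [apply_symm_apply] using huv k)
  obtain ⟨hp, hq⟩ := Fin.monotone_of_interlaced hpq hqp
  exact ⟨inv_eq_one.1 (Perm.eq_one_of_monotone hp), inv_eq_one.1 (Perm.eq_one_of_monotone hq)⟩

end

/-- Indices are 0-based, so `χ̃ i = i - m` and `ξ j = j + 1/2 - m`. A signed permutation is a
pair `(π, e)` of a permutation and signs `e i = ±1`, acting by `χ̃_{σ(i)} = e i * χ̃ (π i)`. -/
theorem stmt4 (m : ℕ) (hm : 0 < m)
    (π π' : Equiv.Perm (Fin m)) (e e' : Fin m → ℚ)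
    (he : ∀ i, e i = 1 ∨ e i = -1) (he' : ∀ j, e' j = 1 ∨ e' j = -1)
    (χ ξ : Fin m → ℚ)
    (hχ : ∀ i, χ i = (i : ℚ) - m) (hξ : ∀ j, ξ j = (j : ℚ) + 1/2 - m)
    (h1 : ∀ i j : Fin m, i < j → e i * χ (π i) - e' j * ξ (π' j) ≠ 1/2)
    (h2 : ∀ i j : Fin m, j < i → e i * χ (π i) - e' j * ξ (π' j) ≠ -(1/2))
    (h3 : ∀ j : Fin m, e' j * ξ (π' j) ≠ 1/2)
    (h4 : ∀ i j : Fin m, e i * χ (π i) + e' j * ξ (π' j) ≠ 1/2) :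
    π = 1 ∧ π' = 1 ∧ (∀ i, e i = 1) ∧ (∀ j, e' j = 1) := by
  obtain ⟨n, rfl⟩ := Nat.exists_eq_add_one_of_ne_zero hm.ne'
  have hvu : ∀ x, ξ x - χ x = 1 / 2 := fun x => by rw [hχ, hξ]; ring
  have huv : ∀ x : Fin n, χ x.succ - ξ x.castSucc = 1 / 2 := fun x => by
    rw [hχ, hξ]; simp only [Fin.val_succ, Fin.val_castSucc]; push_cast; ring
  have hlast : ξ (Fin.last n) = -(1 / 2) := by rw [hξ]; simp only [Fin.val_last]; push_cast; ring
  obtain ⟨hsign, hsign'⟩ := signs_eq_one_of_add_ne_half (a := fun x => e (π.symm x))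
    (b := fun y => e' (π'.symm y)) (fun x => he _) (fun y => he' _) hvu huv hlast
    (fun y => by simpa only [apply_symm_apply] using h3 (π'.symm y))
    (fun x y => by simpa only [apply_symm_apply] using h4 (π.symm x) (π'.symm y))
  have he1 : ∀ i, e i = 1 := fun i => by simpa using hsign (π i)
  have he1' : ∀ j, e' j = 1 := fun j => by simpa using hsign' (π' j)
  obtain ⟨hπ, hπ'⟩ := perms_eq_one_of_sub_ne_half π π' hvu huv
    (fun i j hij => by simpa [he1, he1'] using h1 i j hij)
    (fun i j hij => by simpa [he1, he1'] using h2 i j hij)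
  exact ⟨hπ, hπ', he1, he1'⟩
end

section
/- Let Λ_k^+ = {(d_1,...,d_k) ∈ ℤ^k : d_1 ≥ d_2 ≥ ... ≥ d_k ≥ 0}. Fix m ≤ n and suppose a ∈ Λ_{n-m}^+, d ∈ ℤ^m with d ≥ 0 (componentwise), r ∈ ℤ^m with r ≥ 0, and d + r ∈ Λ_m^+. Then there exists a pair (d̄, r̄) with: (1) d̄ + r̄ = d + r; (2) d̄ ≥ d componentwise (equivalently r̄ ≤ r); (3) d̄ ∈ Λ_m^+ and the concatenation (a, r̄) ∈ Λ_n^+ (i.e., a_{n-m} ≥ r̄_1 and r̄ is weakly decreasing and nonnegative); and (4) for any other pair (d', r') satisfying (1), (2), (3), one has d̄ ≤ d' componentwise. -/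
/-- Let `Λ_k⁺` be the weakly decreasing nonnegative integer `k`-tuples.
Fix `m, k > 0` (with `k = n - m`), `a ∈ Λ_{n-m}⁺`, `d, r ∈ ℤ^m` with `d ≥ 0`, `r ≥ 0`
componentwise and `d + r ∈ Λ_m⁺`.  Then there is a pair `(d̄, r̄)` with
(1) `d̄ + r̄ = d + r`; (2) `d̄ ≥ d` componentwise; (3) `d̄ ∈ Λ_m⁺` and the concatenation
`(a, r̄) ∈ Λ_n⁺` (i.e. `r̄` is weakly decreasing, nonnegative, and `r̄ 0 ≤ a (k-1)`);
and (4) `d̄` is componentwise least among all pairs satisfying (1)–(3). -/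
theorem stmt6 (k m : ℕ) (hk : 0 < k) (hm : 0 < m)
    (a : Fin k → ℤ) (ha0 : ∀ i, 0 ≤ a i) (hadec : ∀ i j : Fin k, i ≤ j → a j ≤ a i)
    (d r : Fin m → ℤ) (hd : ∀ i, 0 ≤ d i) (hr : ∀ i, 0 ≤ r i)
    (hdr : ∀ i j : Fin m, i ≤ j → d j + r j ≤ d i + r i) :
    ∃ db rb : Fin m → ℤ,
      (∀ i, db i + rb i = d i + r i) ∧
      (∀ i, d i ≤ db i) ∧
      (∀ i, 0 ≤ db i) ∧ (∀ i j : Fin m, i ≤ j → db j ≤ db i) ∧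
      (∀ i, 0 ≤ rb i) ∧ (∀ i j : Fin m, i ≤ j → rb j ≤ rb i) ∧
      rb ⟨0, hm⟩ ≤ a ⟨k - 1, by omega⟩ ∧
      (∀ d' r' : Fin m → ℤ,
        (∀ i, d' i + r' i = d i + r i) →
        (∀ i, d i ≤ d' i) →
        (∀ i, 0 ≤ d' i) → (∀ i j : Fin m, i ≤ j → d' j ≤ d' i) →
        (∀ i, 0 ≤ r' i) → (∀ i j : Fin m, i ≤ j → r' j ≤ r' i) →
        r' ⟨0, hm⟩ ≤ a ⟨k - 1, by omega⟩ →
        ∀ i, db i ≤ d' i) := by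
  set A : ℤ := a ⟨k - 1, by omega⟩ with hA
  set s : Fin m → ℤ := fun i => d i + r i with hs
  have hseq : ∀ i, s i = d i + r i := fun _ => rfl
  set M : Fin m → ℤ := fun i => (Finset.Ici i).sup' Finset.nonempty_Ici d with hM
  set t : Fin m → ℤ := fun i => min A ((Finset.Iic i).inf' Finset.nonempty_Iic r) with ht
  -- basic facts
  have hsdec : ∀ i j : Fin m, i ≤ j → s j ≤ s i := hdr
  have hMle : ∀ (i l : Fin m), i ≤ l → d l ≤ M i := fun i l h =>
    Finset.le_sup' d (Finset.mem_Ici.mpr h)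
  have hMdec : ∀ i j : Fin m, i ≤ j → M j ≤ M i := by
    intro i j hij
    exact Finset.sup'_le _ _ fun l hl => hMle i l (le_trans hij (Finset.mem_Ici.mp hl))
  have hMex : ∀ i : Fin m, ∃ l, i ≤ l ∧ M i = d l := by
    intro i
    obtain ⟨l, hl, hle⟩ := Finset.exists_mem_eq_sup' (Finset.nonempty_Ici (a := i)) d
    exact ⟨l, Finset.mem_Ici.mp hl, hle⟩
  have htA : ∀ i : Fin m, t i ≤ A := fun i => min_le_left _ _
  have htle : ∀ (i l : Fin m), l ≤ i → t i ≤ r l := fun i l h =>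
    le_trans (min_le_right _ _) (Finset.inf'_le r (Finset.mem_Iic.mpr h))
  have htdec : ∀ i j : Fin m, i ≤ j → t j ≤ t i := by
    intro i j hij
    refine le_min (min_le_left _ _) (Finset.le_inf' _ _ fun l hl => ?_)
    exact htle j l (le_trans (Finset.mem_Iic.mp hl) hij)
  have htex : ∀ i : Fin m, t i = A ∨ ∃ l, l ≤ i ∧ t i = r l := by
    intro i
    rcases min_cases A ((Finset.Iic i).inf' Finset.nonempty_Iic r) with h | h
    · exact Or.inl h.1
    · obtain ⟨l, hl, hle⟩ := Finset.exists_mem_eq_inf' (Finset.nonempty_Iic (a := i)) r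
      exact Or.inr ⟨l, Finset.mem_Iic.mp hl, h.1.trans hle⟩
  have ht0 : ∀ i : Fin m, 0 ≤ t i := by
    intro i
    exact le_min (ha0 _) (Finset.le_inf' _ _ fun l _ => hr l)
  set db : Fin m → ℤ := fun i => max (M i) (s i - t i) with hdb
  have hdbM : ∀ i, M i ≤ db i := fun i => le_max_left _ _
  have hdbst : ∀ i, s i - t i ≤ db i := fun i => le_max_right _ _
  have hdbmax : ∀ i x, M i ≤ x → s i - t i ≤ x → db i ≤ x := fun i x h1 h2 => max_le h1 h2
  have hdbcases : ∀ i, db i = M i ∨ db i = s i - t i := by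
    intro i
    rcases max_cases (M i) (s i - t i) with ⟨h, _⟩ | ⟨h, _⟩
    · exact Or.inl h
    · exact Or.inr h
  have hdble : ∀ i, d i ≤ db i := fun i => le_trans (hMle i i le_rfl) (hdbM i)
  have hdbs : ∀ i, db i ≤ s i := by
    intro i
    refine hdbmax i _ ?_ (by have := ht0 i; omega)
    obtain ⟨l, hl, hle⟩ := hMex i
    have h1 : s l ≤ s i := hsdec i l hl
    have h2 := hr l
    have h3 := hseq l
    omega
  have hdbdec : ∀ i j : Fin m, i ≤ j → db j ≤ db i := by
    intro i j hij
    refine hdbmax j _ (le_trans (hMdec i j hij) (hdbM i)) ?_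
    rcases htex j with h | ⟨l, hl, hle⟩
    · have h1 : t i ≤ t j := h ▸ htA i
      have h2 : s j ≤ s i := hsdec i j hij
      have := hdbst i; omega
    · rcases le_or_gt l i with hli | hli
      · have h1 : t i ≤ r l := htle i l hli
        have h2 : s j ≤ s i := hsdec i j hij
        have := hdbst i; omega
      · have h1 : s j ≤ s l := hsdec l j hl
        have h2 : d l ≤ M i := hMle i l hli.le
        have h3 := hseq l
        have := hdbM i; omega
  have hrbdec : ∀ i j : Fin m, i ≤ j → s j - db j ≤ s i - db i := by
    intro i j hij
    have h1 : t j ≤ t i := htdec i j hij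
    have h2 : s j - t j ≤ db j := hdbst j
    have h3 : s j ≤ s i := hsdec i j hij
    rcases hdbcases i with he | he
    · obtain ⟨l, hl, hle⟩ := hMex i
      rcases le_or_gt j l with hjl | hjl
      · have h4 : d l ≤ M j := hMle j l hjl
        have h5 : M j ≤ db j := hdbM j
        omega
      · have h4 : s l ≤ s i := hsdec i l hl
        have h5 : t j ≤ r l := htle j l hjl.le
        have h6 := hseq l
        omega
    · omega
  refine ⟨db, fun i => s i - db i, ?_, hdble, ?_, hdbdec, ?_, hrbdec, ?_, ?_⟩
  · intro i; show db i + (s i - db i) = d i + r i; have := hseq i; omega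
  · exact fun i => le_trans (hd i) (hdble i)
  · intro i; show (0:ℤ) ≤ s i - db i; have := hdbs i; omega
  · have h1 : t ⟨0, hm⟩ ≤ A := htA _
    have h2 : s ⟨0, hm⟩ - t ⟨0, hm⟩ ≤ db ⟨0, hm⟩ := hdbst _
    simp only [hA] at h1 ⊢
    omega
  · intro d' r' h1 h2 h3 h4 h5 h6 h7 i
    refine hdbmax i _ ?_ ?_
    · obtain ⟨l, hl, hle⟩ := hMex i
      calc M i = d l := hle
        _ ≤ d' l := h2 l
        _ ≤ d' i := h4 i l hl
    · have hri : r' i ≤ t i := by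
        refine le_min ?_ (Finset.le_inf' _ _ fun l hl => ?_)
        · calc r' i ≤ r' ⟨0, hm⟩ := h6 ⟨0, hm⟩ i (by exact Fin.mk_le_mk.mpr (Nat.zero_le _))
            _ ≤ A := h7
        · calc r' i ≤ r' l := h6 l i (Finset.mem_Iic.mp hl)
            _ ≤ r l := by have := h1 l; have := h2 l; omega
      have := h1 i
      have := hseq i
      omega
end

section
/- In Sp_{2n}(F) over a field F, define for 1 ≤ k ≤ n the polynomial function α_k(g) = det of the k×k submatrix of g with rows 2n+1-k,...,2n and columns 1,...,k. Then: (1) α_k(n_1 g n_2) = α_k(g) for all upper-triangular unipotent elements n_1, n_2 of the standard Borel of Sp_{2n}; (2) α_k(d_n(t_1,...,t_n) g d_n(s_1,...,s_n)) = (∏_{i=1}^k t_i^{-1} s_i) α_k(g), where d_n(t) = diag(t_1,...,t_n,t_n^{-1},...,t_1^{-1}); (3) if w is a Weyl group element (signed permutation matrix) of Sp_{2n} with α_k(w) ≠ 0 for all 1 ≤ k ≤ n, then w is the longest Weyl element w_0. -/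
/-!
Multiplying `g` on the left by an upper unitriangular `u` changes its bottom `k` rows only
through the bottom-right `k × k` block of `u`, which is unitriangular; on the right, the first `k`
columns change only through the top-left block. Hence `α_k` is bi-invariant, and the torus
contributes the diagonal entries picked out by these rows and columns.

For a Weyl element `w` with permutation `σ`, column `j` of the minor `α_{j+1}(w)` vanishes unless
`σ j ≥ 2n - 1 - j`; for `j < n` injectivity of `σ` upgrades this to equality, by induction on `j`.
Preserving the antidiagonal form makes `σ` commute with `j ↦ 2n - 1 - j`, which determines `σ` on
the other half.
-/

/-- The `k × k` lower-left minor `α_k(g)`: the determinant of the submatrix of the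
`2n × 2n` matrix `g` with rows `2n+1-k,…,2n` and columns `1,…,k` (1-based). -/
def alphaMinor {F : Type*} [CommRing F] (n k : ℕ) (hk : k ≤ 2 * n)
    (g : Matrix (Fin (2 * n)) (Fin (2 * n)) F) : F :=
  Matrix.det (Matrix.of fun s t : Fin k =>
    g ⟨2 * n - k + s.val, by have := s.isLt; omega⟩ ⟨t.val, by have := t.isLt; omega⟩)

/-- The torus element `d_n(t) = diag(t_1,…,t_n,t_n⁻¹,…,t_1⁻¹)` of `Sp_{2n}`. -/
noncomputable def dnMat {F : Type*} [Field F] (n : ℕ) (t : Fin n → F) :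
    Matrix (Fin (2 * n)) (Fin (2 * n)) F :=
  Matrix.diagonal fun i =>
    if h : i.val < n then t ⟨i.val, h⟩
    else (t ⟨2 * n - 1 - i.val, by have := i.isLt; omega⟩)⁻¹

/-- The antidiagonal symplectic form defining the realization of `Sp_{2n}` used in the paper. -/
def Jsp {F : Type*} [CommRing F] (n : ℕ) : Matrix (Fin (2 * n)) (Fin (2 * n)) F :=
  Matrix.of fun i j =>
    if i.val + j.val = 2 * n - 1 then (if i.val < n then 1 else -1) else 0

open Matrix

section Minors

variable {R : Type*} [CommRing R]

theorem Matrix.submatrix_mul_of_vanishing_off_range {l m p q o : Type*} [Fintype l]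
    [Fintype o] (A : Matrix m l R) (B : Matrix l p R) (f : q → m) (g : o → p) {e : o → l}
    (he : Function.Injective e) (hAB : ∀ i j a, a ∉ Set.range e → A (f i) a * B a (g j) = 0) :
    (A * B).submatrix f g = A.submatrix f e * B.submatrix e g := by
  ext i j
  exact (Fintype.sum_of_injective e he _ _ (hAB i j) fun _ ↦ rfl).symm

theorem Matrix.det_submatrix_eq_one_of_unitriangular {m k : Type*} [LinearOrder m]
    [LinearOrder k] [Fintype k] [DecidableEq k] (u : Matrix m m R) (hu : u.IsUpperTriangular)
    (hu1 : ∀ i, u i i = 1) {e : k → m} (he : StrictMono e) :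
    (u.submatrix e e).det = 1 := by
  rw [det_of_isUpperTriangular (M := u.submatrix e e) fun i j hij ↦ hu (he hij)]
  exact Finset.prod_eq_one fun i _ ↦ hu1 (e i)

theorem Matrix.det_submatrix_diagonal_mul_mul_diagonal {m k : Type*} [Fintype m]
    [DecidableEq m] [Fintype k] [DecidableEq k] (a b : m → R) (g : Matrix m m R)
    (f e : k → m) :
    ((diagonal a * g * diagonal b).submatrix f e).det =
      (∏ i, a (f i)) * (∏ j, b (e j)) * (g.submatrix f e).det := by
  have : (diagonal a * g * diagonal b).submatrix f e =
      of fun i j ↦ a (f i) * of (fun i j ↦ b (e j) * g.submatrix f e i j) i j := by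
    ext i j
    simp only [submatrix_apply, mul_diagonal, diagonal_mul, of_apply]
    ring
  rw [this, det_mul_column, det_mul_row]
  ring

def lastRows (m k : ℕ) (hk : k ≤ m) (s : Fin k) : Fin m :=
  ⟨m - k + s, by omega⟩

theorem lastRows_strictMono (m k : ℕ) (hk : k ≤ m) : StrictMono (lastRows m k hk) :=
  fun _ _ h ↦ Fin.mk_lt_mk.mpr (by simp only [Fin.lt_def] at h; omega)

theorem mem_range_lastRows_iff {m k : ℕ} (hk : k ≤ m) (a : Fin m) :
    a ∈ Set.range (lastRows m k hk) ↔ m - k ≤ a := by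
  refine ⟨?_, fun h ↦ ⟨⟨a - (m - k), by omega⟩, Fin.ext (by simp only [lastRows]; omega)⟩⟩
  rintro ⟨s, rfl⟩
  exact Nat.le_add_right _ _

theorem mem_range_castLE_iff {m k : ℕ} (hk : k ≤ m) (a : Fin m) :
    a ∈ Set.range (Fin.castLE hk) ↔ (a : ℕ) < k := by
  refine ⟨?_, fun h ↦ ⟨⟨a, h⟩, rfl⟩⟩
  rintro ⟨s, rfl⟩
  exact s.isLt

theorem alphaMinor_eq_det_submatrix (n k : ℕ) (hk : k ≤ 2 * n)
    (g : Matrix (Fin (2 * n)) (Fin (2 * n)) R) :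
    alphaMinor n k hk g = (g.submatrix (lastRows (2 * n) k hk) (Fin.castLE hk)).det :=
  rfl

variable {n k : ℕ} (hk : k ≤ 2 * n) (u g : Matrix (Fin (2 * n)) (Fin (2 * n)) R)

theorem alphaMinor_unitriangular_mul (hu : u.IsUpperTriangular) (hu1 : ∀ i, u i i = 1) :
    alphaMinor n k hk (u * g) = alphaMinor n k hk g := by
  have hsplit := submatrix_mul_of_vanishing_off_range u g (lastRows (2 * n) k hk)
    (Fin.castLE hk) (lastRows_strictMono _ k hk).injective fun i j a ha ↦ by
      rw [mem_range_lastRows_iff, not_le] at ha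
      exact mul_eq_zero_of_left (hu (Fin.lt_def.mpr (by simp only [lastRows, id]; omega))) _
  rw [alphaMinor_eq_det_submatrix, alphaMinor_eq_det_submatrix, hsplit, det_mul,
    det_submatrix_eq_one_of_unitriangular u hu hu1 (lastRows_strictMono _ k hk), one_mul]

theorem alphaMinor_mul_unitriangular (hu : u.IsUpperTriangular) (hu1 : ∀ i, u i i = 1) :
    alphaMinor n k hk (g * u) = alphaMinor n k hk g := by
  have hsplit := submatrix_mul_of_vanishing_off_range g u (lastRows (2 * n) k hk)
    (Fin.castLE hk) (Fin.castLE_injective hk) fun i j a ha ↦ by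
      rw [mem_range_castLE_iff, not_lt] at ha
      exact mul_eq_zero_of_right _
        (hu (Fin.lt_def.mpr (by simp only [Fin.val_castLE, id]; omega)))
  rw [alphaMinor_eq_det_submatrix, alphaMinor_eq_det_submatrix, hsplit, det_mul,
    det_submatrix_eq_one_of_unitriangular u hu hu1 (Fin.strictMono_castLE hk), mul_one]

end Minors

theorem alphaMinor_dnMat_mul_mul {F : Type*} [Field F] {n k : ℕ} (hk : k ≤ n)
    (g : Matrix (Fin (2 * n)) (Fin (2 * n)) F) (t s : Fin n → F) :
    alphaMinor n k (hk.trans (Nat.le_mul_of_pos_left n two_pos)) (dnMat n t * g * dnMat n s) =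
      (∏ i : Fin k, (t (Fin.castLE hk i))⁻¹ * s (Fin.castLE hk i)) *
        alphaMinor n k (hk.trans (Nat.le_mul_of_pos_left n two_pos)) g := by
  rw [alphaMinor_eq_det_submatrix, alphaMinor_eq_det_submatrix, dnMat, dnMat,
    det_submatrix_diagonal_mul_mul_diagonal, Finset.prod_mul_distrib]
  congr 2
  · refine Fintype.prod_equiv Fin.revPerm _ _ fun i ↦ ?_
    rw [dif_neg (by simp only [lastRows]; omega)]
    congr 2
    ext
    simp only [lastRows, Fin.revPerm_apply, Fin.val_rev, Fin.val_castLE]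
    omega
  · exact Finset.prod_congr rfl fun i _ ↦ dif_pos (i.isLt.trans_le hk)

section Monomial

variable {R ι : Type*} [CommRing R] {w : Matrix ι ι R} {σ : Equiv.Perm ι}

theorem Matrix.apply_eq_zero_of_ne_perm (hw : ∀ i j, w i j ≠ 0 ↔ i = σ j) {i j : ι}
    (h : i ≠ σ j) : w i j = 0 :=
  not_not.mp fun h' ↦ h ((hw i j).mp h')

theorem Matrix.transpose_mul_mul_apply_of_perm [Fintype ι] (hw : ∀ i j, w i j ≠ 0 ↔ i = σ j)
    (J : Matrix ι ι R) (i j : ι) :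
    (wᵀ * J * w) i j = w (σ i) i * J (σ i) (σ j) * w (σ j) j := by
  rw [mul_apply, Fintype.sum_eq_single (σ j) fun b hb ↦ by
    rw [apply_eq_zero_of_ne_perm hw hb, mul_zero]]
  rw [mul_apply, Fintype.sum_eq_single (σ i) fun a ha ↦ by
    rw [transpose_apply, apply_eq_zero_of_ne_perm hw ha, zero_mul], transpose_apply]

end Monomial

theorem Jsp_ne_zero_iff {R : Type*} [CommRing R] [Nontrivial R] {n : ℕ}
    (i j : Fin (2 * n)) : Jsp (F := R) n i j ≠ 0 ↔ j = i.rev := by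
  have : j = i.rev ↔ (i : ℕ) + j = 2 * n - 1 := by
    rw [Fin.ext_iff, Fin.val_rev]
    omega
  rw [this, Jsp, of_apply]
  split_ifs <;> simp_all

theorem perm_rev_of_transpose_mul_Jsp_mul {R : Type*} [CommRing R] [Nontrivial R] {n : ℕ}
    {w : Matrix (Fin (2 * n)) (Fin (2 * n)) R} {σ : Equiv.Perm (Fin (2 * n))}
    (hw : ∀ i j, w i j ≠ 0 ↔ i = σ j) (hJ : wᵀ * Jsp n * w = Jsp n) (i : Fin (2 * n)) :
    σ i.rev = (σ i).rev := by
  have hentry := transpose_mul_mul_apply_of_perm hw (Jsp n) i i.rev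
  rw [hJ] at hentry
  have hne : Jsp (F := R) n i i.rev ≠ 0 := (Jsp_ne_zero_iff i i.rev).mpr rfl
  rw [hentry] at hne
  exact (Jsp_ne_zero_iff _ _).mp (right_ne_zero_of_mul (left_ne_zero_of_mul hne))

theorem rev_le_perm_of_alphaMinor_ne_zero {R : Type*} [CommRing R] {n : ℕ}
    {w : Matrix (Fin (2 * n)) (Fin (2 * n)) R} {σ : Equiv.Perm (Fin (2 * n))}
    (hw : ∀ i j, w i j ≠ 0 ↔ i = σ j) (j : Fin (2 * n))
    (hα : alphaMinor n (j + 1) j.isLt w ≠ 0) : j.rev ≤ σ j := by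
  by_contra hlt
  refine hα (det_eq_zero_of_column_eq_zero (Fin.last j) fun s ↦ ?_)
  change w (lastRows (2 * n) (j + 1) j.isLt s) j = 0
  refine apply_eq_zero_of_ne_perm hw fun he ↦ hlt ?_
  rw [Fin.le_def, Fin.val_rev, ← he]
  simp only [lastRows]
  omega

theorem Equiv.Perm.eq_rev_of_rev_le {m : ℕ} (σ : Equiv.Perm (Fin m)) (n : ℕ)
    (h : ∀ j : Fin m, (j : ℕ) < n → j.rev ≤ σ j) (j : Fin m) (hj : (j : ℕ) < n) :
    σ j = j.rev := by
  induction j using WellFoundedLT.induction with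
  | ind j ih =>
    refine le_antisymm (not_lt.mp fun hlt ↦ ?_) (h j hj)
    have hij : (σ j).rev < j := Fin.rev_lt_iff.mpr hlt
    have hσ := ih _ hij (by omega)
    rw [Fin.rev_rev] at hσ
    exact hij.ne (σ.injective hσ)

/-- In `Sp_{2n}(F)`: (1) `α_k` is invariant under left and right
multiplication by upper-triangular unipotent matrices; (2) `α_k(d_n(t) g d_n(s))
= (∏_{i=1}^k t_i⁻¹ s_i) α_k(g)`; (3) if `w` is a signed permutation matrix lying in
`Sp_{2n}` (w.r.t. the antidiagonal form `Jsp`) with `α_k(w) ≠ 0` for all `1 ≤ k ≤ n`,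
then `w` is the longest Weyl element, i.e. its underlying permutation is `j ↦ rev j`. -/
theorem stmt10 {F : Type*} [Field F] (n : ℕ) :
    (∀ (k : ℕ) (hk1 : 1 ≤ k) (hk2 : k ≤ n)
        (g u₁ u₂ : Matrix (Fin (2 * n)) (Fin (2 * n)) F),
      (∀ i j : Fin (2 * n), j < i → u₁ i j = 0) → (∀ i, u₁ i i = 1) →
      (∀ i j : Fin (2 * n), j < i → u₂ i j = 0) → (∀ i, u₂ i i = 1) →
      alphaMinor n k (by omega) (u₁ * g * u₂) = alphaMinor n k (by omega) g) ∧
    (∀ (k : ℕ) (hk1 : 1 ≤ k) (hk2 : k ≤ n)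
        (g : Matrix (Fin (2 * n)) (Fin (2 * n)) F) (t s : Fin n → F),
      (∀ i, t i ≠ 0) → (∀ i, s i ≠ 0) →
      alphaMinor n k (by omega) (dnMat n t * g * dnMat n s) =
        (∏ i : Fin k, (t ⟨i.val, by have := i.isLt; omega⟩)⁻¹ *
          s ⟨i.val, by have := i.isLt; omega⟩) * alphaMinor n k (by omega) g) ∧
    (∀ (w : Matrix (Fin (2 * n)) (Fin (2 * n)) F) (σ : Equiv.Perm (Fin (2 * n))),
      (∀ i j : Fin (2 * n), w i j ≠ 0 ↔ i = σ j) →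
      (∀ j : Fin (2 * n), w (σ j) j = 1 ∨ w (σ j) j = -1) →
      w.transpose * Jsp n * w = Jsp n →
      (∀ (k : ℕ) (hk1 : 1 ≤ k) (hk2 : k ≤ n), alphaMinor n k (by omega) w ≠ 0) →
      ∀ j : Fin (2 * n), σ j = j.rev) := by
  refine ⟨fun k _ hk g u₁ u₂ hu₁ hu₁' hu₂ hu₂' ↦ ?_,
    fun k _ hk g t s _ _ ↦ alphaMinor_dnMat_mul_mul hk g t s, fun w σ hw _ hJ hα ↦ ?_⟩
  · rw [mul_assoc, alphaMinor_unitriangular_mul _ _ _ (fun i j h ↦ hu₁ i j h) hu₁',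
      alphaMinor_mul_unitriangular _ _ _ (fun i j h ↦ hu₂ i j h) hu₂']
  · have hlow := σ.eq_rev_of_rev_le n fun j hj ↦
      rev_le_perm_of_alphaMinor_ne_zero hw j (hα (j + 1) (by omega) hj)
    intro j
    rcases lt_or_ge (j : ℕ) n with hj | hj
    · exact hlow j hj
    · rw [← Fin.rev_rev j, perm_rev_of_transpose_mul_Jsp_mul hw hJ,
        hlow j.rev (by rw [Fin.val_rev]; omega)]
end
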